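/- arXiv:1109.3966 — 2 statements merged into one kernel-verified Lean document; each statement's English description precedes it below -/
import Mathlib

section
/- Let M be a vector space over ℂ, B : M → M → M a ℂ-bilinear map, φ : M → M a ℂ-linear map satisfying the Leibniz rule φ(B(a,b)) = B(φ(a),b) + B(a,φ(b)) for all a,b ∈ M, d : M → M a ℂ-linear map, and Γ ∈ M such that d(Γ) = 0, d(φ(A)) − φ(d(A)) = B(Γ,A) for all A ∈ M, and B(φ^i(Γ), φ^j(Γ)) = B(φ^j(Γ), φ^i(Γ)) for all natural numbers i,j. For n ≥ 1 define γ_n = ((−1)^{n-1} / n!) • φ^{n-1}(Γ) ∈ M. Then for every n ≥ 1, d(γ_n) + (1/2) • Σ_{j=1}^{n-1} B(γ_j, γ_{n-j}) = 0; that is, the formal power series Γ(t) = Σ_{n≥1} t^n γ_n satisfies the Maurer–Cartan equation d(Γ(t)) + (1/2) B(Γ(t),Γ(t)) = 0 order by order. -/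
/-!
Because `d` commutes with `φ` up to `B Γ` and `φ` is a derivation of `B`, induction on `n` gives
`d (φ^[n+1] Γ) = ∑_{i+j=n} C(n+1, i+1) • B (φ^[i] Γ) (φ^[j] Γ)`. As `B` is symmetric on the
`φ^[k] Γ`, symmetrizing and Pascal's rule turn this into
`2 • d (φ^[n+1] Γ) = ∑_{i+j=n} C(n+2, i+1) • B (φ^[i] Γ) (φ^[j] Γ)`, and since
`C(n+2, i+1) / (n+2)! = 1 / ((i+1)! (j+1)!)` the right-hand side is `(-1)^n (n+2)!` times the
quadratic term of the Maurer–Cartan equation at order `n + 2`.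
-/

open Finset

theorem Finset.Nat.two_nsmul_sum_antidiagonal_choose_succ {M : Type*} [AddCommMonoid M]
    (f : ℕ → ℕ → M) (hf : ∀ i j, f i j = f j i) (n : ℕ) :
    2 • ∑ p ∈ antidiagonal n, (n + 1).choose (p.1 + 1) • f p.1 p.2 =
      ∑ p ∈ antidiagonal n, (n + 2).choose (p.1 + 1) • f p.1 p.2 := by
  have hswap : ∑ p ∈ antidiagonal n, (n + 1).choose (p.1 + 1) • f p.1 p.2 =
      ∑ p ∈ antidiagonal n, (n + 1).choose p.1 • f p.1 p.2 := by
    rw [← Finset.Nat.sum_antidiagonal_swap]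
    refine sum_congr rfl fun p hp => ?_
    rw [HasAntidiagonal.mem_antidiagonal] at hp
    rw [Prod.fst_swap, Prod.snd_swap, hf,
      Nat.choose_symm_of_eq_add (show n + 1 = (p.2 + 1) + p.1 by omega)]
  rw [two_nsmul]
  nth_rw 1 [hswap]
  rw [← sum_add_distrib]
  refine sum_congr rfl fun p _ => ?_
  rw [← add_nsmul, ← Nat.choose_succ_succ']

theorem map_iterate_succ_eq_sum_antidiagonal {R M : Type*} [CommSemiring R] [AddCommGroup M]
    [Module R M] {B : M →ₗ[R] M →ₗ[R] M} {φ d : M →ₗ[R] M} {Γ : M}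
    (hLeib : ∀ a b, φ (B a b) = B (φ a) b + B a (φ b)) (hdΓ : d Γ = 0)
    (hΓ : ∀ A, d (φ A) - φ (d A) = B Γ A) (n : ℕ) :
    d ((⇑φ)^[n + 1] Γ) =
      ∑ p ∈ antidiagonal n, (n + 1).choose (p.1 + 1) • B ((⇑φ)^[p.1] Γ) ((⇑φ)^[p.2] Γ) := by
  have hstep : ∀ k, d ((⇑φ)^[k + 1] Γ) = φ (d ((⇑φ)^[k] Γ)) + B Γ ((⇑φ)^[k] Γ) := fun k => by
    rw [Function.iterate_succ_apply', ← hΓ, add_sub_cancel]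
  induction n with
  | zero => simpa [hdΓ] using hstep 0
  | succ n ih =>
    simp only [Nat.choose_succ_succ' (n + 1), add_nsmul, sum_add_distrib]
    rw [Finset.Nat.sum_antidiagonal_succ, Finset.Nat.sum_antidiagonal_succ', hstep, ih, map_sum]
    simp only [map_nsmul, hLeib, nsmul_add, sum_add_distrib, ← Function.iterate_succ_apply' φ]
    simp only [Nat.choose_zero_right, Nat.choose_succ_self, Function.iterate_zero_apply, one_smul,
      zero_nsmul, Nat.succ_eq_add_one]
    abel

theorem Finset.Nat.sum_Icc_one_eq_sum_antidiagonal {M : Type*} [AddCommMonoid M]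
    (f : ℕ → ℕ → M) (n : ℕ) :
    ∑ j ∈ Icc 1 (n + 1), f j (n + 2 - j) = ∑ p ∈ antidiagonal n, f (p.1 + 1) (p.2 + 1) := by
  rw [Finset.Nat.sum_antidiagonal_eq_sum_range_succ (fun i j => f (i + 1) (j + 1)),
    ← Ico_add_one_right_eq_Icc, sum_Ico_eq_sum_range]
  refine sum_congr rfl fun i hi => ?_
  rw [mem_range] at hi
  rw [add_comm 1 i, show n + 2 - (i + 1) = n - i + 1 by omega]

theorem div_factorial_mul_div_factorial {K : Type*} [Field K] [CharZero K] (x y : K) (a b : ℕ) :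
    x / a.factorial * (y / b.factorial) = x * y / (a + b).factorial * (a + b).choose a := by
  have : ((a + b).factorial : K) ≠ 0 := Nat.cast_ne_zero.mpr (Nat.factorial_ne_zero _)
  rw [Nat.cast_add_choose]
  field_simp

/-- The formal power series `Γ(t) = ∑_{n ≥ 1} t^n γ_n` with
`γ_n = ((−1)^{n−1}/n!) • φ^{n−1} Γ` satisfies the Maurer–Cartan equation
order by order. -/
theorem maurer_cartan_series {M : Type*} [AddCommGroup M] [Module ℂ M]
    (B : M →ₗ[ℂ] M →ₗ[ℂ] M) (φ : M →ₗ[ℂ] M)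
    (hLeib : ∀ a b : M, φ (B a b) = B (φ a) b + B a (φ b))
    (d : M →ₗ[ℂ] M) (Γ : M)
    (hdΓ : d Γ = 0)
    (hΓ : ∀ A : M, d (φ A) - φ (d A) = B Γ A)
    (hsymm : ∀ i j : ℕ, B ((⇑φ)^[i] Γ) ((⇑φ)^[j] Γ) = B ((⇑φ)^[j] Γ) ((⇑φ)^[i] Γ))
    (γ : ℕ → M)
    (hγ : ∀ n : ℕ, γ n = ((-1 : ℂ) ^ (n - 1) / (n.factorial : ℂ)) • (⇑φ)^[n - 1] Γ) :
    ∀ n : ℕ, 1 ≤ n →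
      d (γ n) + (1 / 2 : ℂ) • ∑ j ∈ Finset.Icc 1 (n - 1), B (γ j) (γ (n - j)) = 0 := by
  have hγ_succ (i : ℕ) : γ (i + 1) = ((-1 : ℂ) ^ i / ((i + 1).factorial : ℂ)) • (⇑φ)^[i] Γ := by
    simpa using hγ (i + 1)
  rintro (_ | _ | k) hn
  · omega
  · simp [hγ_succ, hdΓ]
  have hprod : ∀ p ∈ antidiagonal k, B (γ (p.1 + 1)) (γ (p.2 + 1)) =
      ((-1 : ℂ) ^ k / ((k + 2).factorial : ℂ)) •
        (k + 2).choose (p.1 + 1) • B ((⇑φ)^[p.1] Γ) ((⇑φ)^[p.2] Γ) := by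
    rintro ⟨i, j⟩ hij
    rw [HasAntidiagonal.mem_antidiagonal] at hij
    subst hij
    simp only [hγ_succ, map_smul, LinearMap.smul_apply, smul_smul]
    rw [← Nat.cast_smul_eq_nsmul ℂ, smul_smul, mul_comm ((-1 : ℂ) ^ j / _), div_factorial_mul_div_factorial, ← pow_add,
      show i + 1 + (j + 1) = i + j + 2 by omega]
  have hd := Finset.Nat.two_nsmul_sum_antidiagonal_choose_succ
    (fun i j => B ((⇑φ)^[i] Γ) ((⇑φ)^[j] Γ)) hsymm k
  rw [← map_iterate_succ_eq_sum_antidiagonal hLeib hdΓ hΓ] at hd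
  rw [show k + 2 - 1 = k + 1 by rfl, Finset.Nat.sum_Icc_one_eq_sum_antidiagonal
    (fun i j => B (γ i) (γ j)), sum_congr rfl hprod, ← smul_sum, ← hd, hγ_succ, map_smul]
  module
end

section
/- Let 𝔤 be a real Lie algebra with underlying vector space V, let ω be a nondegenerate alternating bilinear form on 𝔤 that is closed (ω([x,y],z) + ω([y,z],x) + ω([z,x],y) = 0 for all x,y,z), and let γ : 𝔤 → End(V) be a linear map that is torsion-free (γ(x)y − γ(y)x = [x,y]), symplectic (ω(γ(x)y,z) + ω(y,γ(x)z) = 0), and flat (γ([x,y]) = γ(x)γ(y) − γ(y)γ(x)). Define on 𝔥 = 𝔤 × V the bracket [(x,u),(y,v)] = ([x,y], γ(x)v − γ(y)u), and the bilinear form Ω₁((x,u),(y,v)) = −ω(x,v) − ω(u,y). Then Ω₁ is alternating, nondegenerate, and closed: Ω₁([h₁,h₂],h₃) + Ω₁([h₂,h₃],h₁) + Ω₁([h₃,h₁],h₂) = 0 for all h₁,h₂,h₃ ∈ 𝔥. -/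
/-!
Alternation and nondegeneracy of `Ω₁` are inherited from those of `ω`, one component at a time.
The cyclic sum is linear in `u₁, u₂, u₃`. Antisymmetry and the symplectic condition move `γ` onto
the `𝔤`-arguments, where torsion-freeness produces the bracket:
`ω(⁅x, y⁆, u) = ω(γ x u, y) - ω(γ y u, x)`. With this, the coefficient of each `uᵢ` vanishes.
-/

namespace LinearMap

variable {R M : Type*} [CommRing R] [AddCommGroup M] [Module R M]

def semidirectForm (ω : M →ₗ[R] M →ₗ[R] R) : M × M →ₗ[R] M × M →ₗ[R] R :=
  -ω.compl₁₂ (fst R M M) (snd R M M) - ω.compl₁₂ (snd R M M) (fst R M M)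

@[simp]
theorem semidirectForm_apply (ω : M →ₗ[R] M →ₗ[R] R) (x u y v : M) :
    semidirectForm ω (x, u) (y, v) = -ω x v - ω u y :=
  rfl

theorem IsAlt.semidirectForm {ω : M →ₗ[R] M →ₗ[R] R} (hω : ω.IsAlt) :
    (semidirectForm ω).IsAlt := by
  rintro ⟨x, u⟩
  rw [semidirectForm_apply, ← hω.neg u x]
  ring

theorem SeparatingLeft.semidirectForm {ω : M →ₗ[R] M →ₗ[R] R} (hω : ω.SeparatingLeft) :
    (semidirectForm ω).SeparatingLeft := by
  rintro ⟨x, u⟩ h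
  have hx : x = 0 := hω x fun v => by simpa using h (0, v)
  have hu : u = 0 := hω u fun y => by simpa using h (y, 0)
  rw [hx, hu, Prod.zero_eq_mk]

end LinearMap

section Semidirect

open LinearMap

variable {R 𝔤 : Type*} [CommRing R] [LieRing 𝔤] [Module R 𝔤]

def semidirectBracket (γ : 𝔤 → Module.End R 𝔤) (h₁ h₂ : 𝔤 × 𝔤) : 𝔤 × 𝔤 :=
  (⁅h₁.1, h₂.1⁆, γ h₁.1 h₂.2 - γ h₂.1 h₁.2)

variable {ω : 𝔤 →ₗ[R] 𝔤 →ₗ[R] R} {γ : 𝔤 → Module.End R 𝔤}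

theorem form_lie_eq_sub (hω : ω.IsAlt) (h_tf : ∀ x y : 𝔤, γ x y - γ y x = ⁅x, y⁆)
    (h_symp : ∀ x y z : 𝔤, ω (γ x y) z + ω y (γ x z) = 0) (x y u : 𝔤) :
    ω ⁅x, y⁆ u = ω (γ x u) y - ω (γ y u) x := by
  have hx : ω (γ x u) y = ω (γ x y) u := by
    rw [eq_neg_of_add_eq_zero_left (h_symp x u y), hω.neg]
  have hy : ω (γ y u) x = ω (γ y x) u := by
    rw [eq_neg_of_add_eq_zero_left (h_symp y u x), hω.neg]
  rw [hx, hy, ← h_tf, map_sub, LinearMap.sub_apply]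

theorem semidirectForm_cyclic_sum_eq_zero (hω : ω.IsAlt)
    (h_tf : ∀ x y : 𝔤, γ x y - γ y x = ⁅x, y⁆)
    (h_symp : ∀ x y z : 𝔤, ω (γ x y) z + ω y (γ x z) = 0) (h₁ h₂ h₃ : 𝔤 × 𝔤) :
    semidirectForm ω (semidirectBracket γ h₁ h₂) h₃ +
      semidirectForm ω (semidirectBracket γ h₂ h₃) h₁ +
      semidirectForm ω (semidirectBracket γ h₃ h₁) h₂ = 0 := by
  obtain ⟨x₁, u₁⟩ := h₁
  obtain ⟨x₂, u₂⟩ := h₂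
  obtain ⟨x₃, u₃⟩ := h₃
  simp only [semidirectBracket, semidirectForm_apply, map_sub, LinearMap.sub_apply,
    form_lie_eq_sub hω h_tf h_symp]
  ring

end Semidirect

theorem semidirect_Omega1_symplectic_general {𝔤 : Type*} [LieRing 𝔤] [LieAlgebra ℝ 𝔤]
    (ω : 𝔤 →ₗ[ℝ] 𝔤 →ₗ[ℝ] ℝ)
    (hω_alt : ∀ x : 𝔤, ω x x = 0)
    (hω_nd : ∀ x : 𝔤, (∀ y : 𝔤, ω x y = 0) → x = 0)
    (γ : 𝔤 →ₗ[ℝ] Module.End ℝ 𝔤)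
    (h_tf : ∀ x y : 𝔤, γ x y - γ y x = ⁅x, y⁆)
    (h_symp : ∀ x y z : 𝔤, ω (γ x y) z + ω y (γ x z) = 0)
    (br : (𝔤 × 𝔤) → (𝔤 × 𝔤) → (𝔤 × 𝔤))
    (hbr : ∀ x u y v : 𝔤, br (x, u) (y, v) = (⁅x, y⁆, γ x v - γ y u))
    (Ω₁ : (𝔤 × 𝔤) → (𝔤 × 𝔤) → ℝ)
    (hΩ₁ : ∀ x u y v : 𝔤, Ω₁ (x, u) (y, v) = -ω x v - ω u y) :
    (∀ h : 𝔤 × 𝔤, Ω₁ h h = 0) ∧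
    (∀ h : 𝔤 × 𝔤, (∀ h' : 𝔤 × 𝔤, Ω₁ h h' = 0) → h = 0) ∧
    (∀ h₁ h₂ h₃ : 𝔤 × 𝔤,
      Ω₁ (br h₁ h₂) h₃ + Ω₁ (br h₂ h₃) h₁ + Ω₁ (br h₃ h₁) h₂ = 0) := by
  obtain rfl : br = semidirectBracket γ := funext₂ fun ⟨x, u⟩ ⟨y, v⟩ => hbr x u y v
  obtain rfl : Ω₁ = fun h h' => LinearMap.semidirectForm ω h h' :=
    funext₂ fun ⟨x, u⟩ ⟨y, v⟩ => hΩ₁ x u y v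
  exact ⟨LinearMap.IsAlt.semidirectForm hω_alt, LinearMap.SeparatingLeft.semidirectForm hω_nd,
    semidirectForm_cyclic_sum_eq_zero hω_alt h_tf h_symp⟩

/-- The form `Ω₁((x,u),(y,v)) = −ω(x,v) − ω(u,y)` on the semi-direct product
`𝔥 = 𝔤 ⋉ V` is an alternating, nondegenerate, closed 2-form. -/
theorem semidirect_Omega1_symplectic {𝔤 : Type*} [LieRing 𝔤] [LieAlgebra ℝ 𝔤]
    (ω : 𝔤 →ₗ[ℝ] 𝔤 →ₗ[ℝ] ℝ)
    (hω_alt : ∀ x : 𝔤, ω x x = 0)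
    (hω_nd : ∀ x : 𝔤, (∀ y : 𝔤, ω x y = 0) → x = 0)
    (hω_cl : ∀ x y z : 𝔤, ω ⁅x, y⁆ z + ω ⁅y, z⁆ x + ω ⁅z, x⁆ y = 0)
    (γ : 𝔤 →ₗ[ℝ] Module.End ℝ 𝔤)
    (h_tf : ∀ x y : 𝔤, γ x y - γ y x = ⁅x, y⁆)
    (h_symp : ∀ x y z : 𝔤, ω (γ x y) z + ω y (γ x z) = 0)
    (h_flat : ∀ x y v : 𝔤, γ ⁅x, y⁆ v = γ x (γ y v) - γ y (γ x v))
    (br : (𝔤 × 𝔤) → (𝔤 × 𝔤) → (𝔤 × 𝔤))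
    (hbr : ∀ x u y v : 𝔤, br (x, u) (y, v) = (⁅x, y⁆, γ x v - γ y u))
    (Ω₁ : (𝔤 × 𝔤) → (𝔤 × 𝔤) → ℝ)
    (hΩ₁ : ∀ x u y v : 𝔤, Ω₁ (x, u) (y, v) = -ω x v - ω u y) :
    (∀ h : 𝔤 × 𝔤, Ω₁ h h = 0) ∧
    (∀ h : 𝔤 × 𝔤, (∀ h' : 𝔤 × 𝔤, Ω₁ h h' = 0) → h = 0) ∧
    (∀ h₁ h₂ h₃ : 𝔤 × 𝔤,
      Ω₁ (br h₁ h₂) h₃ + Ω₁ (br h₂ h₃) h₁ + Ω₁ (br h₃ h₁) h₂ = 0) :=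
  semidirect_Omega1_symplectic_general ω hω_alt hω_nd γ h_tf h_symp br hbr Ω₁ hΩ₁
end
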